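/- arXiv:2507.05732 — 7 statements merged into one kernel-verified Lean document; each statement's English description precedes it below -/
import Mathlib

section
/- Let W be a vector subspace of the space of homogeneous degree-d polynomials in κ[x_0,...,x_m], where κ is an algebraically closed field. If the greatest common divisor of all nonzero elements of W is 1, then there exist two elements F, G ∈ W with gcd(F, G) = 1. -/
/-- Let `W` be a subspace of the space of homogeneous degree-`d` polynomials in
`κ[x_0,…,x_m]` over an algebraically closed field `κ`. If the gcd of all nonzero
elements of `W` is `1` (i.e. any common divisor of the nonzero elements of `W` is a
unit), then there exist `F, G ∈ W` with `gcd(F,G) = 1` (i.e. `F` and `G` are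
relatively prime). -/
theorem exists_coprime_pair_of_gcd_one
    (κ : Type*) [Field κ] [IsAlgClosed κ] (m d : ℕ) (hm : 1 ≤ m) (hd : 1 ≤ d)
    (W : Submodule κ (MvPolynomial (Fin (m + 1)) κ))
    (hW : W ≤ MvPolynomial.homogeneousSubmodule (Fin (m + 1)) κ d)
    (hgcd : ∀ g : MvPolynomial (Fin (m + 1)) κ,
      (∀ f ∈ W, f ≠ 0 → g ∣ f) → IsUnit g) :
    ∃ F ∈ W, ∃ G ∈ W, IsRelPrime F G := by
  classical
  set R := MvPolynomial (Fin (m + 1)) κ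
  letI : NormalizationMonoid R := (UniqueFactorizationMonoid.normalizationMonoid (α := R)).toNormalizationMonoid
  -- W contains a nonzero element
  by_cases hW0 : ∀ f ∈ W, f = 0
  · exfalso
    have hu : IsUnit (MvPolynomial.X 0 : R) :=
      hgcd (MvPolynomial.X 0) (fun f hf hne => absurd (hW0 f hf) hne)
    have : IsUnit (MvPolynomial.eval (0 : Fin (m+1) → κ) (MvPolynomial.X 0)) := hu.map _
    simp at this
  push_neg at hW0
  obtain ⟨F, hFW, hF0⟩ := hW0
  let S := (UniqueFactorizationMonoid.normalizedFactors F).toFinset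
  let V : S → Subspace κ W := fun p =>
    Submodule.comap W.subtype ((Ideal.span {(p : R)}).restrictScalars κ)
  have hV : ∀ p : S, V p ≠ ⊤ := by
    intro p hp
    have hprime : Prime (p : R) :=
      UniqueFactorizationMonoid.prime_of_normalized_factor _ (Multiset.mem_toFinset.mp p.2)
    apply hprime.not_unit
    apply hgcd
    intro f hf _
    have : (⟨f, hf⟩ : W) ∈ V p := hp ▸ Submodule.mem_top
    simpa [V, Ideal.mem_span_singleton] using this
  obtain ⟨g, hg⟩ : ∃ g : W, ∀ p : S, g ∉ V p := by
    by_contra h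
    push_neg at h
    obtain ⟨p, hp⟩ := Subspace.exists_eq_top_of_iUnion_eq_univ (p := V)
      (Set.eq_univ_of_forall fun x => by
        obtain ⟨p, hp⟩ := h x
        exact Set.mem_iUnion.mpr ⟨p, hp⟩)
    exact hV p hp
  refine ⟨F, hFW, (g : R), g.2, ?_⟩
  intro h hF hG
  by_contra hu
  have hh0 : h ≠ 0 := by
    rintro rfl
    exact hF0 (zero_dvd_iff.mp hF)
  obtain ⟨q, hqirr, hqh⟩ := WfDvdMonoid.exists_irreducible_factor hu hh0
  obtain ⟨q', hq'mem, hq'assoc⟩ :=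
    UniqueFactorizationMonoid.exists_mem_normalizedFactors_of_dvd hF0 hqirr (hqh.trans hF)
  apply hg ⟨q', Multiset.mem_toFinset.mpr hq'mem⟩
  have hq'g : (q' : R) ∣ (g : R) := hq'assoc.symm.dvd.trans (hqh.trans hG)
  simpa [V, Ideal.mem_span_singleton] using hq'g
end

section
/- Let X ⊆ ℙ^m(κ) be a finite set of points with |X| ≤ d, and let P ∈ ℙ^m(κ) \ X. Then the space of homogeneous degree-d polynomials vanishing on X ∪ {P} has dimension one less than the space of homogeneous degree-d polynomials vanishing on X. -/
open MvPolynomial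

/-- `I_d(Y)`: the space of homogeneous degree-`d` polynomials in `κ[x_0,…,x_m]`
vanishing at every point of `Y ⊆ ℙ^m(κ)`. -/
noncomputable def vanishingForms (κ : Type*) [Field κ] (m d : ℕ)
    (Y : Set (Projectivization κ (Fin (m + 1) → κ))) :
    Submodule κ (MvPolynomial (Fin (m + 1)) κ) :=
  MvPolynomial.homogeneousSubmodule (Fin (m + 1)) κ d ⊓
    ⨅ p ∈ Y, LinearMap.ker ((MvPolynomial.aeval (R := κ) p.rep).toLinearMap)

section Aux
variable {κ : Type*} [Field κ] {n : ℕ}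

/-- Linear form attached to a dual functional. -/
noncomputable def dualForm (φ : Module.Dual κ (Fin n → κ)) : MvPolynomial (Fin n) κ :=
  ∑ i, C (φ (Pi.single i 1)) * X i

lemma dualForm_isHomogeneous (φ : Module.Dual κ (Fin n → κ)) :
    (dualForm φ).IsHomogeneous 1 :=
  IsHomogeneous.sum _ _ _ fun i _ => isHomogeneous_C_mul_X _ _

lemma aeval_dualForm (φ : Module.Dual κ (Fin n → κ)) (v : Fin n → κ) :
    aeval v (dualForm φ) = φ v := by
  have hv : v = ∑ i, (v i) • (Pi.single i (1 : κ) : Fin n → κ) := by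
    ext j; simp [Pi.single_apply]
  rw [dualForm]
  conv_rhs => rw [hv]
  simp [map_sum, mul_comm]

open Projectivization in
lemma exists_dual_sep {m : ℕ} (P Q : Projectivization κ (Fin (m + 1) → κ)) (hPQ : Q ≠ P) :
    ∃ φ : Module.Dual κ (Fin (m + 1) → κ), φ Q.rep = 0 ∧ φ P.rep ≠ 0 := by
  have hmem : P.rep ∉ Submodule.span κ {Q.rep} := by
    intro h
    rw [Submodule.mem_span_singleton] at h
    obtain ⟨a, ha⟩ := h
    have hPQ' : P = Q := by
      rw [← P.mk_rep, ← Q.mk_rep, mk_eq_mk_iff' κ _ _ P.rep_nonzero Q.rep_nonzero]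
      exact ⟨a, ha⟩
    exact hPQ hPQ'.symm
  obtain ⟨f, hf, hmap⟩ :=
    Submodule.exists_dual_map_eq_bot_of_notMem hmem inferInstance
  refine ⟨f, ?_, hf⟩
  have : f Q.rep ∈ Submodule.map f (Submodule.span κ {Q.rep}) :=
    Submodule.mem_map_of_mem (Submodule.mem_span_singleton_self _)
  rw [hmap] at this
  simpa using this

end Aux

lemma exists_witness (κ : Type*) [Field κ] (m d : ℕ)
    (X : Set (Projectivization κ (Fin (m + 1) → κ)))
    (hX : X.Finite) (hXcard : X.ncard ≤ d)
    (P : Projectivization κ (Fin (m + 1) → κ)) (hP : P ∉ X) :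
    ∃ F ∈ vanishingForms κ m d X, aeval P.rep F ≠ 0 := by
  classical
  haveI := hX.fintype
  -- choose separating functionals
  have hsep : ∀ Q : X, ∃ φ : Module.Dual κ (Fin (m + 1) → κ),
      φ (Q : Projectivization κ (Fin (m + 1) → κ)).rep = 0 ∧ φ P.rep ≠ 0 := fun Q =>
    exists_dual_sep P Q (fun h => hP (h ▸ Q.2))
  choose g hg0 hgP using hsep
  obtain ⟨φ₀, hφ₀, -⟩ := Submodule.exists_dual_map_eq_bot_of_notMem
    (p := (⊥ : Submodule κ (Fin (m + 1) → κ)))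
    (by simpa using P.rep_nonzero) inferInstance
  set F : MvPolynomial (Fin (m + 1)) κ :=
    (∏ q : X, dualForm (g q)) * (dualForm φ₀) ^ (d - X.ncard) with hF
  have hcard : Fintype.card X = X.ncard := by
    rw [Set.ncard_eq_toFinset_card']
    simp [Set.toFinset_card]
  have hhom : F.IsHomogeneous d := by
    have h1 : (∏ q : X, dualForm (g q)).IsHomogeneous X.ncard := by
      have := MvPolynomial.IsHomogeneous.prod Finset.univ
        (fun q : X => dualForm (g q)) (fun _ => 1)
        (fun q _ => dualForm_isHomogeneous (g q))
      simpa [hcard] using this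
    have h2 : ((dualForm φ₀) ^ (d - X.ncard)).IsHomogeneous (d - X.ncard) := by
      simpa using (dualForm_isHomogeneous φ₀).pow (d - X.ncard)
    have := h1.mul h2
    rwa [Nat.add_sub_cancel' hXcard] at this
  refine ⟨F, ⟨hhom, ?_⟩, ?_⟩
  · rw [SetLike.mem_coe, Submodule.mem_iInf]
    intro Q
    rw [Submodule.mem_iInf]
    intro hQ
    simp only [LinearMap.mem_ker, AlgHom.toLinearMap_apply, hF, map_mul, map_prod]
    have : aeval Q.rep (dualForm (g ⟨Q, hQ⟩)) = 0 := by
      rw [aeval_dualForm]; exact hg0 ⟨Q, hQ⟩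
    rw [Finset.prod_eq_zero (Finset.mem_univ (⟨Q, hQ⟩ : X)) this, zero_mul]
  · simp only [hF, map_mul, map_prod, map_pow, aeval_dualForm]
    exact mul_ne_zero (Finset.prod_ne_zero_iff.2 fun q _ => hgP q) (pow_ne_zero _ hφ₀)


/-- If `X ⊆ ℙ^m(κ)` is a finite set of points with `|X| ≤ d` and `P ∉ X`, then the
space of degree-`d` forms vanishing on `X ∪ {P}` has dimension one less than the
space of degree-`d` forms vanishing on `X`. -/
theorem finrank_vanishingForms_insert
    (κ : Type*) [Field κ] [IsAlgClosed κ] (m d : ℕ) (hm : 1 ≤ m) (hd : 1 ≤ d)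
    (X : Set (Projectivization κ (Fin (m + 1) → κ)))
    (hX : X.Finite) (hXcard : X.ncard ≤ d)
    (P : Projectivization κ (Fin (m + 1) → κ)) (hP : P ∉ X) :
    Module.finrank κ (vanishingForms κ m d X)
      = Module.finrank κ (vanishingForms κ m d (X ∪ {P})) + 1 := by
  classical
  set f := (MvPolynomial.aeval (R := κ) P.rep).toLinearMap with hf
  set V := vanishingForms κ m d X with hV
  have hunion : vanishingForms κ m d (X ∪ {P}) = V ⊓ LinearMap.ker f := by
    ext q
    simp only [vanishingForms, Submodule.mem_inf, Submodule.mem_iInf, Set.mem_union,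
      Set.mem_singleton_iff, hV, hf]
    constructor
    · rintro ⟨h1, h2⟩
      exact ⟨⟨h1, fun p hp => h2 p (Or.inl hp)⟩, h2 P (Or.inr rfl)⟩
    · rintro ⟨⟨h1, h2⟩, h3⟩
      exact ⟨h1, fun p hp => hp.elim (h2 p) (fun hp => hp ▸ h3)⟩
  haveI : FiniteDimensional κ V := by
    apply Submodule.finiteDimensional_of_le (S₂ := restrictTotalDegree (Fin (m + 1)) κ d)
    intro p hp
    rw [mem_restrictTotalDegree]
    exact ((mem_homogeneousSubmodule _ _).1 hp.1).totalDegree_le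
  set ψ := f.domRestrict V with hψ
  have hker : Module.finrank κ (LinearMap.ker ψ)
      = Module.finrank κ (vanishingForms κ m d (X ∪ {P})) := by
    have h1 : LinearMap.ker ψ = Submodule.comap V.subtype (V ⊓ LinearMap.ker f) := by
      rw [hψ, LinearMap.ker_domRestrict]
      ext x
      simp [x.2]
    rw [h1, hunion]
    exact (Submodule.comapSubtypeEquivOfLe inf_le_left).finrank_eq
  obtain ⟨F, hFV, hFP⟩ := exists_witness κ m d X hX hXcard P hP
  have hrange : LinearMap.range ψ = ⊤ := by
    rw [eq_top_iff]
    intro x _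
    refine ⟨(x * (aeval P.rep F)⁻¹) • ⟨F, hFV⟩, ?_⟩
    simp only [hψ, map_smul, LinearMap.domRestrict_apply, hf, AlgHom.toLinearMap_apply,
      smul_eq_mul]
    field_simp
  have := LinearMap.finrank_range_add_finrank_ker ψ
  rw [hrange, finrank_top, Module.finrank_self, hker] at this
  omega
end

section
/- With Ω(d,m) the set of (m+1)-tuples of nonnegative integers summing to d ordered lexicographically (largest first), for each 1 ≤ l ≤ m+1, the tuple (0,...,0,d,0,...,0) with d in position l is the r-th largest element where r = binom(m+d,d) − binom(m+d−l+1,d) + 1. -/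
open Finset

/-- `u` is strictly larger than `w` in lexicographic order (tuples encoded as
functions `ℕ → ℕ`, with entries in positions `1,…,m+1`). -/
def lexGT (u w : ℕ → ℕ) : Prop := ∃ i, (∀ j, j < i → u j = w j) ∧ w i < u i

/-- `u ≥ w` in lexicographic order. -/
def lexGE (u w : ℕ → ℕ) : Prop := u = w ∨ lexGT u w

/-- `Ω(d,m)`: tuples `(γ_1,…,γ_{m+1})` of nonnegative integers summing to `d`,
encoded as functions `ℕ → ℕ` supported on `{1,…,m+1}`. -/
def Omega (d m : ℕ) : Set (ℕ → ℕ) :=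
  {γ | (∀ i, i = 0 ∨ m + 1 < i → γ i = 0) ∧ ∑ i ∈ Finset.Icc 1 (m + 1), γ i = d}

/-- `Ω'(d,m)`: `Ω(d,m)` with the tuples having `d` in position `j` (`2 ≤ j ≤ m`)
and zeros elsewhere removed. -/
def OmegaP (d m : ℕ) : Set (ℕ → ℕ) :=
  Omega d m \ {γ | ∃ j, 2 ≤ j ∧ j ≤ m ∧ γ = fun i => if i = j then d else 0}

/-- Binomial coefficient on integers, equal to `0` when either argument is negative. -/
def chooseZ (n k : ℤ) : ℤ := if 0 ≤ n ∧ 0 ≤ k then Nat.choose n.toNat k.toNat else 0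

-- auxiliary
def Sset (a m d : ℕ) : Set (ℕ → ℕ) :=
  {u | (∀ i, i < a ∨ m + 1 < i → u i = 0) ∧ ∑ i ∈ Finset.Icc a (m + 1), u i = d}

def gmap (a m : ℕ) (P : Fin (m + 2 - a) → ℕ) : ℕ → ℕ :=
  fun i => if h : a ≤ i ∧ i ≤ m + 1 then P ⟨i - a, by omega⟩ else 0

lemma gmap_inj (a m : ℕ) (ha : a ≤ m + 1) : Function.Injective (gmap a m) := by
  intro P Q h
  funext j
  have hj := j.isLt
  have h1 : a ≤ a + (j : ℕ) ∧ a + (j : ℕ) ≤ m + 1 := by omega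
  have h2 := congrFun h (a + (j : ℕ))
  simp only [gmap, dif_pos h1] at h2
  have he : (⟨a + (j : ℕ) - a, by omega⟩ : Fin (m + 2 - a)) = j := by
    apply Fin.ext
    show a + (j : ℕ) - a = (j : ℕ)
    omega
  rwa [he] at h2

lemma sum_shift (a m : ℕ) (u : ℕ → ℕ) :
    ∑ i ∈ Finset.Icc a (m + 1), u i = ∑ j : Fin (m + 2 - a), u (a + j) := by
  rw [Fin.sum_univ_eq_sum_range (fun j => u (a + j)) (m + 2 - a),
    ← Finset.Ico_add_one_right_eq_Icc, Finset.sum_Ico_eq_sum_range]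
  rfl

lemma Sset_eq_image (a m d : ℕ) (ha : a ≤ m + 1) :
    Sset a m d = gmap a m '' {P | ∑ i, P i = d} := by
  ext u
  constructor
  · rintro ⟨hsupp, hsum⟩
    refine ⟨fun j => u (a + j), ?_, ?_⟩
    · show ∑ i : Fin (m + 2 - a), u (a + (i : ℕ)) = d
      rw [← sum_shift a m u]
      exact hsum
    · funext i
      by_cases h : a ≤ i ∧ i ≤ m + 1
      · simp only [gmap, dif_pos h]
        show u (a + (i - a)) = u i
        congr 1
        omega
      · simp only [gmap, dif_neg h]
        exact (hsupp i (by omega)).symm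
  · rintro ⟨P, hP, rfl⟩
    constructor
    · intro i hi
      have h : ¬(a ≤ i ∧ i ≤ m + 1) := by omega
      simp [gmap, h]
    · rw [sum_shift a m]
      have h : ∀ j : Fin (m + 2 - a), gmap a m P (a + (j : ℕ)) = P j := by
        intro j
        have hj := j.isLt
        have h1 : a ≤ a + (j : ℕ) ∧ a + (j : ℕ) ≤ m + 1 := by omega
        simp only [gmap, dif_pos h1]
        congr 1
        apply Fin.ext
        show a + (j : ℕ) - a = (j : ℕ)
        omega
      rw [Finset.sum_congr rfl (fun j _ => h j)]
      exact hP

lemma card_sum_fin (k d : ℕ) :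
    Nat.card {P : Fin k → ℕ // ∑ i, P i = d} = (k + d - 1).choose d := by
  rw [← Nat.card_congr (Sym.equivNatSumOfFintype (Fin k) d)]
  simp [Nat.card_eq_fintype_card, Sym.card_sym_eq_choose]

lemma finite_sum_fin (k d : ℕ) : {P : Fin k → ℕ | ∑ i, P i = d}.Finite := by
  have h : Finite {P : Fin k → ℕ // ∑ i, P i = d} :=
    Finite.of_equiv _ (Sym.equivNatSumOfFintype (Fin k) d)
  exact Set.finite_coe_iff.mp h

lemma Sset_finite (a m d : ℕ) (ha : a ≤ m + 1) : (Sset a m d).Finite := by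
  rw [Sset_eq_image a m d ha]
  exact (finite_sum_fin _ d).image _

lemma Sset_ncard (a m d : ℕ) (ha : a ≤ m + 1) :
    (Sset a m d).ncard = (m + d + 1 - a).choose d := by
  have h2 : m + 2 - a + d - 1 = m + d + 1 - a := by omega
  rw [Sset_eq_image a m d ha,
    Set.ncard_image_of_injective _ (gmap_inj a m ha),
    ← Nat.card_coe_set_eq]
  have h0 : Nat.card ↥{P : Fin (m + 2 - a) → ℕ | ∑ i, P i = d}
      = (m + 2 - a + d - 1).choose d := card_sum_fin (m + 2 - a) d
  rw [h0, h2]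

/-- For `1 ≤ l ≤ m+1`, the tuple `(0,…,0,d,0,…,0)` with `d` in position `l` is the
`r`-th largest element of `Ω(d,m)` in lex order, where
`r = C(m+d,d) − C(m+d−l+1,d) + 1`. -/
theorem rank_of_basis_tuple (m d l : ℕ) (hm : 1 ≤ m) (hd : 1 ≤ d)
    (hl : 1 ≤ l) (hlm : l ≤ m + 1) :
    (fun i => if i = l then d else 0) ∈ Omega d m ∧
    {u ∈ Omega d m | lexGE u (fun i => if i = l then d else 0)}.ncard
      = Nat.choose (m + d) d - Nat.choose (m + d + 1 - l) d + 1 := by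
  classical
  set e : ℕ → ℕ := fun i => if i = l then d else 0 with he_def
  have he_mem : e ∈ Omega d m := by
    constructor
    · intro i hi
      have h : i ≠ l := by omega
      simp [he_def, h]
    · show ∑ i ∈ Finset.Icc 1 (m + 1), (if i = l then d else 0) = d
      rw [Finset.sum_ite_eq' (Finset.Icc 1 (m + 1)) l fun _ => d]
      simp [Finset.mem_Icc, hl, hlm]
  refine ⟨he_mem, ?_⟩
  have hOmega : Omega d m = Sset 1 m d := by
    ext u
    constructor <;> rintro ⟨h1, h2⟩ <;> exact ⟨fun i hi => h1 i (by omega), h2⟩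
  have hIccsub : Finset.Icc l (m + 1) ⊆ Finset.Icc 1 (m + 1) :=
    Finset.Icc_subset_Icc (by omega) le_rfl
  have hsub : Sset l m d ⊆ Omega d m := by
    rintro u ⟨h1, h2⟩
    refine ⟨fun i hi => h1 i (by omega), ?_⟩
    rw [← h2]
    refine (Finset.sum_subset hIccsub ?_).symm
    intro x hx hx2
    simp only [Finset.mem_Icc] at hx hx2
    exact h1 x (by omega)
  have heS : e ∈ Sset l m d := by
    constructor
    · intro i hi
      have h : i ≠ l := by omega
      simp [he_def, h]
    · show ∑ i ∈ Finset.Icc l (m + 1), (if i = l then d else 0) = d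
      rw [Finset.sum_ite_eq' (Finset.Icc l (m + 1)) l fun _ => d]
      simp [Finset.mem_Icc, hlm]
  have hset : {u ∈ Omega d m | lexGE u e} = insert e (Omega d m \ Sset l m d) := by
    ext u
    simp only [Set.mem_sep_iff, Set.mem_insert_iff, Set.mem_diff]
    constructor
    · rintro ⟨hu, (rfl | hgt)⟩
      · exact Or.inl rfl
      · right
        refine ⟨hu, fun huS => ?_⟩
        obtain ⟨i, hagree, hlt⟩ := hgt
        rcases lt_trichotomy i l with hil | rfl | hli
        · -- i < l : u i = 0 by huS, but e i = 0 < u i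
          have h0 : u i = 0 := huS.1 i (Or.inl hil)
          have h1 : e i = 0 := by simp [he_def]; omega
          omega
        · -- i = l : u l > d impossible since sum = d
          have h1 : e i = d := by simp [he_def]
          have h2 : u i ≤ d := by
            rw [← hu.2]
            exact Finset.single_le_sum (fun j _ => Nat.zero_le _)
              (Finset.mem_Icc.mpr ⟨hl, hlm⟩)
          omega
        · -- l < i
          have hul : u l = d := by
            have := hagree l hli
            simpa [he_def] using this
          have hei : e i = 0 := by simp [he_def]; omega
          have hipos : 0 < u i := by omega
          by_cases him : i ≤ m + 1
          · have hpairsub : ({l, i} : Finset ℕ) ⊆ Finset.Icc 1 (m + 1) := by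
              intro x hx
              simp only [Finset.mem_insert, Finset.mem_singleton] at hx
              rcases hx with rfl | rfl <;> (rw [Finset.mem_Icc]; omega)
            have hle : u l + u i ≤ d := by
              calc u l + u i = ∑ x ∈ ({l, i} : Finset ℕ), u x :=
                    (Finset.sum_pair (by omega)).symm
                _ ≤ ∑ x ∈ Finset.Icc 1 (m + 1), u x :=
                    Finset.sum_le_sum_of_subset hpairsub
                _ = d := hu.2
            omega
          · have := hu.1 i (Or.inr (by omega))
            omega
    · rintro (rfl | ⟨hu, hnS⟩)
      · exact ⟨he_mem, Or.inl rfl⟩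
      · refine ⟨hu, Or.inr ?_⟩
        have hex : ∃ i, i < l ∧ u i ≠ 0 := by
          by_contra hno
          push_neg at hno
          apply hnS
          refine ⟨fun i hi => ?_, ?_⟩
          · rcases hi with hi | hi
            · exact hno i hi
            · exact hu.1 i (Or.inr hi)
          · rw [← hu.2]
            refine Finset.sum_subset hIccsub ?_
            intro x hx hx2
            simp only [Finset.mem_Icc] at hx hx2
            exact hno x (by omega)
        obtain ⟨i, hil, hiu⟩ := hex
        have hw : ∃ n, u n ≠ 0 := ⟨i, hiu⟩
        have hfle : Nat.find hw ≤ i := Nat.find_min' hw hiu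
        refine ⟨Nat.find hw, ?_, ?_⟩
        · intro j hj
          have hj0 : u j = 0 := by
            have := Nat.find_min hw hj
            simpa using this
          have hjl : j ≠ l := by omega
          simp [he_def, hjl, hj0]
        · have h1 : e (Nat.find hw) = 0 := by
            have : Nat.find hw ≠ l := by omega
            simp [he_def, this]
          have h2 := Nat.find_spec hw
          omega
  have hOmFin : (Omega d m).Finite := by
    rw [hOmega]; exact Sset_finite 1 m d (by omega)
  have henotin : e ∉ Omega d m \ Sset l m d := fun h => h.2 heS
  rw [hset, Set.ncard_insert_of_notMem henotin hOmFin.diff,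
    Set.ncard_diff hsub (Sset_finite l m d hlm)]
  rw [hOmega, Sset_ncard 1 m d (by omega), Sset_ncard l m d hlm]
  have h3 : m + d + 1 - 1 = m + d := by omega
  rw [h3]
end

section
/- Let w_s(d,m) = (α_1,...,α_{m+1}) be the s-th largest element of Ω(d,m) under lexicographic order, and let l be the smallest index with α_l ≠ 0. Then binom(m+d,d) − binom(m+d+1−l,d) < s ≤ binom(m+d,d) − binom(m+d−l,d). -/
open Finset

lemma multichoose_succ_eq_sum (c n : ℕ) :
    Nat.multichoose (c + 1) n = ∑ j ∈ Finset.range (n + 1), Nat.multichoose c j := by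
  induction n with
  | zero => simp [Nat.multichoose_zero_right]
  | succ n ih =>
    rw [Finset.sum_range_succ, ← ih, Nat.multichoose_succ_succ, add_comm]

lemma card_piAntidiag_nat (s : Finset ℕ) (n : ℕ) :
    (Finset.piAntidiag s n).card = Nat.multichoose s.card n := by
  induction s using Finset.cons_induction generalizing n with
  | empty =>
    cases n with
    | zero => simp
    | succ n => simp [Nat.multichoose_zero_succ]
  | cons i s hi ih =>
    rw [Finset.piAntidiag_cons hi, Finset.card_disjiUnion]
    simp only [Finset.card_map, ih]
    rw [Finset.Nat.sum_antidiagonal_eq_sum_range_succ_mk, Finset.card_cons,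
      multichoose_succ_eq_sum]
    have := Finset.sum_range_reflect (fun j => Nat.multichoose s.card j) (n + 1)
    simpa using this

/-- The elements of `Ω(d,m)` vanishing below position `a` form the coercion of a
`piAntidiag` finset. -/
lemma OmegaZero_eq (d m a : ℕ) (ha : 1 ≤ a) :
    {u | u ∈ Omega d m ∧ ∀ j, j < a → u j = 0} =
      ↑(Finset.piAntidiag (Finset.Icc a (m + 1)) d) := by
  have hsub : Finset.Icc a (m + 1) ⊆ Finset.Icc 1 (m + 1) :=
    Finset.Icc_subset_Icc ha le_rfl
  ext u
  simp only [Set.mem_setOf_eq, Finset.mem_coe, Finset.mem_piAntidiag]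
  constructor
  · rintro ⟨⟨h0, hsum⟩, hz⟩
    constructor
    · rw [← hsum]
      refine Finset.sum_subset hsub fun i hi hni => ?_
      rw [Finset.mem_Icc] at hi
      rw [Finset.mem_Icc] at hni
      exact hz i (by omega)
    · intro i hi
      have h1 : ¬(i = 0 ∨ m + 1 < i) := fun h => hi (h0 i h)
      have h2 : ¬i < a := fun h => hi (hz i h)
      rw [Finset.mem_Icc]
      omega
  · rintro ⟨hsum, hsupp⟩
    have hz : ∀ j, j < a → u j = 0 := by
      intro j hj
      by_contra h
      have := hsupp j h
      rw [Finset.mem_Icc] at this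
      omega
    refine ⟨⟨fun i hi => ?_, ?_⟩, hz⟩
    · by_contra h
      have := hsupp i h
      rw [Finset.mem_Icc] at this
      omega
    · rw [← hsum]
      refine (Finset.sum_subset hsub fun i hi hni => ?_).symm
      rw [Finset.mem_Icc] at hi
      rw [Finset.mem_Icc] at hni
      exact hz i (by omega)

lemma ncard_OmegaZero (d m a : ℕ) (ha : 1 ≤ a) :
    {u | u ∈ Omega d m ∧ ∀ j, j < a → u j = 0}.ncard = Nat.multichoose (m + 2 - a) d := by
  rw [OmegaZero_eq d m a ha, Set.ncard_coe_finset, card_piAntidiag_nat, Nat.card_Icc]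

lemma finite_OmegaZero (d m a : ℕ) (ha : 1 ≤ a) :
    {u | u ∈ Omega d m ∧ ∀ j, j < a → u j = 0}.Finite := by
  rw [OmegaZero_eq d m a ha]
  exact (Finset.piAntidiag _ _).finite_toSet

lemma my_pascal (c d : ℕ) (hd : 1 ≤ d) :
    (c + 1).choose d = c.choose (d - 1) + c.choose d := by
  obtain ⟨e, rfl⟩ : ∃ e, d = e + 1 := ⟨d - 1, by omega⟩
  simp [Nat.choose_succ_succ]

/-- If `w_s(d,m) = (α_1,…,α_{m+1})` and `l` is the smallest index with `α_l ≠ 0`,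
then `C(m+d,d) − C(m+d+1−l,d) < s ≤ C(m+d,d) − C(m+d−l,d)`. -/
theorem rank_range_of_first_nonzero (m d s : ℕ) (hm : 1 ≤ m) (hd : 1 ≤ d)
    (α : ℕ → ℕ) (hα : α ∈ Omega d m)
    (hs : {u ∈ Omega d m | lexGE u α}.ncard = s)
    (l : ℕ) (hl : α l ≠ 0) (hmin : ∀ j, j < l → α j = 0) :
    Nat.choose (m + d) d - Nat.choose (m + d + 1 - l) d < s ∧
      s ≤ Nat.choose (m + d) d - Nat.choose (m + d - l) d := by
  have hl1 : 1 ≤ l := by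
    rcases Nat.eq_zero_or_pos l with h | h
    · exact absurd (hα.1 l (Or.inl h)) hl
    · exact h
  have hl2 : l ≤ m + 1 := by
    by_contra h
    exact hl (hα.1 l (Or.inr (by omega)))
  have hαl : 1 ≤ α l := Nat.pos_of_ne_zero hl
  -- the relevant sets
  set A : Set (ℕ → ℕ) := {u | u ∈ Omega d m ∧ ∀ j, j < l → u j = 0} with hA_def
  set A' : Set (ℕ → ℕ) := {u | u ∈ A ∧ 1 ≤ u l} with hA'_def
  set T : Set (ℕ → ℕ) := Omega d m \ A with hT_def
  set R : Set (ℕ → ℕ) := {u ∈ Omega d m | lexGE u α} with hR_def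
  -- cardinalities
  have hΩeq : Omega d m = {u | u ∈ Omega d m ∧ ∀ j, j < 1 → u j = 0} := by
    ext u
    refine ⟨fun hu => ⟨hu, fun j hj => ?_⟩, fun hu => hu.1⟩
    interval_cases j
    exact hu.1 0 (Or.inl rfl)
  have hfinΩ : (Omega d m).Finite := by
    rw [hΩeq]; exact finite_OmegaZero d m 1 le_rfl
  have hcardΩ : (Omega d m).ncard = Nat.choose (m + d) d := by
    rw [hΩeq, ncard_OmegaZero d m 1 le_rfl, Nat.multichoose_eq]
    congr 1
    omega
  have hfinA : A.Finite := finite_OmegaZero d m l hl1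
  have hcardA : A.ncard = Nat.choose (m + d + 1 - l) d := by
    rw [hA_def, ncard_OmegaZero d m l hl1, Nat.multichoose_eq]
    congr 1
    omega
  -- the decrement bijection for A'
  set F : (ℕ → ℕ) → (ℕ → ℕ) := fun v i => if i = l then v i + 1 else v i with hF_def
  have hFinj : Function.Injective F := by
    intro v w h
    funext i
    have h' := congr_fun h i
    simp only [hF_def] at h'
    split_ifs at h' <;> omega
  have hmemIcc : l ∈ Finset.Icc l (m + 1) := Finset.mem_Icc.mpr ⟨le_rfl, hl2⟩
  have hA'img : A' = F '' ↑(Finset.piAntidiag (Finset.Icc l (m + 1)) (d - 1)) := by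
    ext u
    constructor
    · rintro ⟨huA, hul⟩
      have huP : u ∈ (Finset.piAntidiag (Finset.Icc l (m + 1)) d : Set (ℕ → ℕ)) := by
        rw [← OmegaZero_eq d m l hl1]; exact huA
      rw [Finset.mem_coe, Finset.mem_piAntidiag] at huP
      have hu1 : u l + ∑ x ∈ (Finset.Icc l (m + 1)).erase l, u x = d := by
        rw [Finset.add_sum_erase _ _ hmemIcc]; exact huP.1
      refine ⟨fun i => if i = l then u i - 1 else u i, ?_, ?_⟩
      · rw [Finset.mem_coe, Finset.mem_piAntidiag]
        constructor
        · rw [← Finset.add_sum_erase _ _ hmemIcc, if_pos rfl]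
          have he : ∑ x ∈ (Finset.Icc l (m + 1)).erase l, (if x = l then u x - 1 else u x)
              = ∑ x ∈ (Finset.Icc l (m + 1)).erase l, u x :=
            Finset.sum_congr rfl fun i hi => if_neg (Finset.ne_of_mem_erase hi)
          rw [he]
          omega
        · intro i hi
          by_cases h : i = l
          · subst h; exact hmemIcc
          · rw [if_neg h] at hi
            exact huP.2 i hi
      · funext i
        by_cases h : i = l <;> simp only [hF_def, h, if_true, if_false]
        · omega
    · rintro ⟨v, hv, rfl⟩
      rw [Finset.mem_coe, Finset.mem_piAntidiag] at hv
      have hFvP : F v ∈ (Finset.piAntidiag (Finset.Icc l (m + 1)) d : Set (ℕ → ℕ)) := by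
        rw [Finset.mem_coe, Finset.mem_piAntidiag]
        have hv1 : v l + ∑ x ∈ (Finset.Icc l (m + 1)).erase l, v x = d - 1 := by
          rw [Finset.add_sum_erase _ _ hmemIcc]; exact hv.1
        constructor
        · rw [← Finset.add_sum_erase _ (F v) hmemIcc]
          have he : ∑ x ∈ (Finset.Icc l (m + 1)).erase l, F v x
              = ∑ x ∈ (Finset.Icc l (m + 1)).erase l, v x := by
            refine Finset.sum_congr rfl fun i hi => ?_
            simp only [hF_def, if_neg (Finset.ne_of_mem_erase hi)]
          have hFl : F v l = v l + 1 := by simp [hF_def]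
          rw [he, hFl]
          omega
        · intro i hi
          by_cases h : i = l
          · subst h; exact hmemIcc
          · simp only [hF_def, if_neg h] at hi
            exact hv.2 i hi
      rw [← OmegaZero_eq d m l hl1] at hFvP
      refine ⟨hFvP, ?_⟩
      simp [hF_def]
  have hfinA' : A'.Finite := by
    rw [hA'img]
    exact ((Finset.piAntidiag _ _).finite_toSet).image _
  have hcardA' : A'.ncard = Nat.choose (m + d - l) (d - 1) := by
    rw [hA'img, Set.ncard_image_of_injective _ hFinj, Set.ncard_coe_finset,
      card_piAntidiag_nat, Nat.card_Icc, Nat.multichoose_eq]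
    congr 1
    omega
  -- basic memberships
  have hαA : α ∈ A := ⟨hα, hmin⟩
  have hαT : α ∉ T := fun h => h.2 hαA
  have hAsub : A ⊆ Omega d m := fun u hu => hu.1
  have hfinT : T.Finite := hfinΩ.subset Set.diff_subset
  have hfinR : R.Finite := hfinΩ.subset (fun u hu => hu.1)
  have hcardT : T.ncard = (Omega d m).ncard - A.ncard := Set.ncard_diff hAsub hfinA
  -- T ⊆ R and α ∈ R
  have hTR : insert α T ⊆ R := by
    rintro u hu
    rcases Set.mem_insert_iff.mp hu with rfl | hu
    · exact ⟨hα, Or.inl rfl⟩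
    · obtain ⟨huΩ, huA⟩ := hu
      have hex : ∃ j, u j ≠ α j := by
        by_contra h
        push_neg at h
        exact huA ⟨huΩ, fun j hj => by rw [h j, hmin j hj]⟩
      have hex' : ∃ j, j < l ∧ u j ≠ 0 := by
        by_contra h
        push_neg at h
        exact huA ⟨huΩ, h⟩
      obtain ⟨j, hjl, hj0⟩ := hex'
      have hexP : ∃ i, u i ≠ α i := ⟨j, by rw [hmin j hjl]; exact hj0⟩
      refine ⟨huΩ, Or.inr ⟨Nat.find hexP, fun j' hj' => ?_, ?_⟩⟩
      · by_contra h
        exact Nat.find_min hexP hj' h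
      · have hle : Nat.find hexP ≤ j := Nat.find_min' hexP (by rw [hmin j hjl]; exact hj0)
        have h0 : α (Nat.find hexP) = 0 := hmin _ (by omega)
        have := Nat.find_spec hexP
        omega
  -- R ⊆ T ∪ A'
  have hRTA : R ⊆ T ∪ A' := by
    rintro u ⟨huΩ, hge⟩
    by_cases hz : ∀ j, j < l → u j = 0
    · right
      refine ⟨⟨huΩ, hz⟩, ?_⟩
      rcases hge with rfl | ⟨i, hji, hlt⟩
      · exact hαl
      · rcases lt_trichotomy i l with h | rfl | h
        · have := hz i h
          omega
        · omega
        · have := hji l h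
          omega
    · exact Or.inl ⟨huΩ, fun h => hz h.2⟩
  have hdisj : Disjoint T A' := by
    rw [Set.disjoint_left]
    rintro u ⟨_, huA⟩ ⟨hu, _⟩
    exact huA hu
  -- assemble
  have hlower : T.ncard + 1 ≤ s := by
    rw [← hs]
    calc T.ncard + 1 = (insert α T).ncard := (Set.ncard_insert_of_notMem hαT hfinT).symm
      _ ≤ R.ncard := Set.ncard_le_ncard hTR hfinR
  have hupper : s ≤ T.ncard + A'.ncard := by
    rw [← hs, ← Set.ncard_union_eq hdisj hfinT hfinA']
    exact Set.ncard_le_ncard hRTA (hfinT.union hfinA')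
  have hBleN : Nat.choose (m + d + 1 - l) d ≤ Nat.choose (m + d) d :=
    Nat.choose_le_choose d (by omega)
  have hpas : Nat.choose (m + d + 1 - l) d
      = Nat.choose (m + d - l) (d - 1) + Nat.choose (m + d - l) d := by
    have h1 : m + d + 1 - l = (m + d - l) + 1 := by omega
    rw [h1, my_pascal _ _ hd]
  rw [hcardT, hcardΩ, hcardA] at hlower hupper
  rw [hcardA'] at hupper
  omega
end

section
/- Let w_s(d,m) = (α_1,...,α_{m+1}), let l be the smallest index with α_l ≠ 0, and set c = α_l. Then binom(m+d,d) − binom(m+d+1−l,d) + binom(m+d−l−c,d−c−1) < s ≤ binom(m+d,d) − binom(m+d+1−l,d) + binom(m+d−l−c+1,d−c). -/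
open Finset

lemma chooseZ_natCast (a b : ℕ) : chooseZ a b = Nat.choose a b := by
  simp [chooseZ]

lemma card_finsetSym {α : Type*} [DecidableEq α] (s : Finset α) (n : ℕ) :
    (s.sym n).card = (s.card + n - 1).choose n := by
  classical
  have himg : s.sym n = (univ : Finset (Sym {x // x ∈ s} n)).image (Sym.map Subtype.val) := by
    ext m
    simp only [mem_image, mem_univ, true_and, Finset.mem_sym_iff]
    constructor
    · intro h
      refine ⟨⟨m.1.attach.map (fun x => ⟨x.1, h x.1 (by exact x.2)⟩), by simp [m.2]⟩, ?_⟩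
      apply Sym.coe_injective
      simp [Sym.map, Multiset.map_map]
    · rintro ⟨m', rfl⟩ a ha
      rw [Sym.mem_map] at ha
      obtain ⟨b, _, rfl⟩ := ha
      exact b.2
  rw [himg, card_image_of_injective _ (Sym.map_injective Subtype.val_injective _),
    card_univ, Sym.card_sym_eq_choose, Fintype.card_coe]

lemma card_piAntidiag {ι : Type*} [DecidableEq ι] (s : Finset ι) (n : ℕ) :
    (piAntidiag s n).card = (s.card + n - 1).choose n := by
  rw [← map_sym_eq_piAntidiag, card_map, card_finsetSym]

lemma card_filter_ge (t : Finset ℕ) {l : ℕ} (hl : l ∈ t) {d e : ℕ} (he : e ≤ d) :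
    ((piAntidiag t d).filter fun u => e ≤ u l).card = (piAntidiag t (d - e)).card := by
  classical
  refine card_nbij' (fun u i => u i - if i = l then e else 0)
    (fun v i => v i + if i = l then e else 0) ?_ ?_ ?_ ?_
  · intro u hu
    simp only [mem_coe, mem_filter, mem_piAntidiag] at hu
    obtain ⟨⟨hsum, hsupp⟩, hle⟩ := hu
    rw [mem_coe, mem_piAntidiag]
    constructor
    · rw [Finset.sum_tsub_distrib _ (fun i _ => by split <;> simp_all [Nat.le_of_eq]),
        hsum, Finset.sum_ite_eq' t l (fun _ => e), if_pos hl]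
    · intro i hi
      exact hsupp i (fun h0 => hi (by simp [h0]))
  · intro v hv
    rw [mem_coe, mem_piAntidiag] at hv
    obtain ⟨hsum, hsupp⟩ := hv
    simp only [mem_coe, mem_filter, mem_piAntidiag]
    refine ⟨⟨?_, ?_⟩, by simp⟩
    · rw [Finset.sum_add_distrib, hsum, Finset.sum_ite_eq' t l (fun _ => e), if_pos hl]
      omega
    · intro i hi
      rcases eq_or_ne i l with rfl | hne
      · exact hl
      · exact hsupp i (by simpa [hne] using hi)
  · intro u hu
    simp only [mem_coe, mem_filter] at hu
    funext i
    rcases eq_or_ne i l with rfl | hne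
    · simp; omega
    · simp [hne]
  · intro v _
    funext i
    rcases eq_or_ne i l with rfl | hne
    · simp
    · simp [hne]

lemma mem_Omega_iff {d m : ℕ} {u : ℕ → ℕ} :
    u ∈ Omega d m ↔ u ∈ piAntidiag (Finset.Icc 1 (m + 1)) d := by
  simp only [Omega, Set.mem_setOf_eq, mem_piAntidiag, mem_Icc]
  constructor
  · rintro ⟨h1, h2⟩
    exact ⟨h2, fun i hi => by by_contra hc; exact hi (h1 i (by omega))⟩
  · rintro ⟨h2, h1⟩
    refine ⟨fun i hi => ?_, h2⟩
    by_contra hc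
    have := h1 i hc
    omega

/-- If `w_s(d,m) = (α_1,…,α_{m+1})`, `l` is the smallest index with `α_l ≠ 0` and
`c = α_l`, then
`C(m+d,d) − C(m+d+1−l,d) + C(m+d−l−c,d−c−1) < s ≤ C(m+d,d) − C(m+d+1−l,d) + C(m+d−l−c+1,d−c)`,
where binomial coefficients with a negative argument are `0`. -/
theorem rank_range_of_first_nonzero_value (m d s : ℕ) (hm : 1 ≤ m) (hd : 1 ≤ d)
    (α : ℕ → ℕ) (hα : α ∈ Omega d m)
    (hs : {u ∈ Omega d m | lexGE u α}.ncard = s)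
    (l : ℕ) (hl : α l ≠ 0) (hmin : ∀ j, j < l → α j = 0) :
    (Nat.choose (m + d) d : ℤ) - chooseZ ((m : ℤ) + d + 1 - l) d
        + chooseZ ((m : ℤ) + d - l - α l) ((d : ℤ) - α l - 1) < (s : ℤ) ∧
      (s : ℤ) ≤ (Nat.choose (m + d) d : ℤ) - chooseZ ((m : ℤ) + d + 1 - l) d
        + chooseZ ((m : ℤ) + d - l - α l + 1) ((d : ℤ) - α l) := by
  classical
  set c := α l with hc
  -- basic facts about l
  have hl1 : 1 ≤ l := by
    rcases Nat.eq_zero_or_pos l with h0 | h; · exact absurd (hα.1 l (Or.inl h0)) hl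
    exact h
  have hlm : l ≤ m + 1 := by
    by_contra h
    exact hl (hα.1 l (Or.inr (by omega)))
  set t1 : Finset ℕ := Finset.Icc 1 (m + 1) with ht1
  set t2 : Finset ℕ := Finset.Icc l (m + 1) with ht2
  have hlt2 : l ∈ t2 := by simp [ht2, hlm]
  have hlt1 : l ∈ t1 := by simp [ht1, hl1, hlm]
  have ht2sub : t2 ⊆ t1 := by
    intro x hx; simp only [ht1, ht2, mem_Icc] at *; omega
  set T : Finset (ℕ → ℕ) := piAntidiag t1 d with hT
  set Z : Finset (ℕ → ℕ) := piAntidiag t2 d with hZ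
  set W : Finset (ℕ → ℕ) := T.filter (fun u => lexGE u α) with hW
  set B : Finset (ℕ → ℕ) := Z.filter (fun u => c + 1 ≤ u l) with hB
  set C : Finset (ℕ → ℕ) := Z.filter (fun u => c ≤ u l) with hC
  -- α ∈ T
  have hαT : α ∈ T := mem_Omega_iff.1 hα
  have hαT' := mem_piAntidiag.1 hαT
  -- c ≤ d
  have hcd : c ≤ d := by
    have h1 : α l ≤ ∑ i ∈ t1, α i := Finset.single_le_sum (fun i _ => Nat.zero_le _) hlt1
    have h2 : ∑ i ∈ t1, α i = d := hαT'.1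
    omega
  -- Z ⊆ T
  have hZT : Z ⊆ T := by
    intro u hu
    rw [hZ, mem_piAntidiag] at hu
    rw [hT, mem_piAntidiag]
    refine ⟨?_, fun i hi => ht2sub (hu.2 i hi)⟩
    rw [← hu.1]
    exact (Finset.sum_subset ht2sub (fun x _ hx =>
      not_ne_iff.mp fun h => hx (hu.2 x h))).symm
  -- α ∈ Z
  have hαZ : α ∈ Z := by
    rw [hZ, mem_piAntidiag]
    have hsupp : ∀ i, α i ≠ 0 → i ∈ t2 := by
      intro i hi
      have h1 : i ∈ t1 := hαT'.2 i hi
      simp only [ht1, ht2, mem_Icc] at *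
      constructor
      · by_contra h; exact hi (hmin i (by omega))
      · exact h1.2
    refine ⟨?_, hsupp⟩
    rw [← hαT'.1]
    exact (Finset.sum_subset ht2sub (fun x _ hx =>
      not_ne_iff.mp fun h => hx (hsupp x h)))
  -- members of Z vanish below l
  have hZzero : ∀ u ∈ Z, ∀ j, j < l → u j = 0 := by
    intro u hu j hj
    rw [hZ, mem_piAntidiag] at hu
    by_contra h
    have := hu.2 j h
    simp only [ht2, mem_Icc] at this
    omega
  -- s = W.card
  have hsW : s = W.card := by
    rw [← hs]
    have : {u ∈ Omega d m | lexGE u α} = ↑W := by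
      ext u
      simp only [Set.mem_setOf_eq, hW, coe_filter, mem_Omega_iff, hT, ht1]
    rw [this, Set.ncard_coe_finset]
  -- T \ Z ⊆ W
  have hAW : T \ Z ⊆ W := by
    intro u hu
    rw [mem_sdiff] at hu
    obtain ⟨huT, huZ⟩ := hu
    have huT' := mem_piAntidiag.1 huT
    have hex : ∃ j, u j ≠ 0 ∧ j < l := by
      by_contra h
      push_neg at h
      apply huZ
      rw [hZ, mem_piAntidiag]
      have hsupp : ∀ i, u i ≠ 0 → i ∈ t2 := by
        intro i hi
        have h1 := huT'.2 i hi
        have h2 := h i hi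
        simp only [ht1, ht2, mem_Icc] at *
        omega
      refine ⟨?_, hsupp⟩
      rw [← huT'.1]
      exact (Finset.sum_subset ht2sub (fun x _ hx =>
        not_ne_iff.mp fun h => hx (hsupp x h)))
    obtain ⟨j0, hj0ne, hj0l⟩ := hex
    have hex' : ∃ j, u j ≠ 0 := ⟨j0, hj0ne⟩
    have hfl : Nat.find hex' < l := lt_of_le_of_lt (Nat.find_le hj0ne) hj0l
    rw [hW, mem_filter]
    refine ⟨huT, Or.inr ⟨Nat.find hex', fun j hj => ?_, ?_⟩⟩
    · rw [of_not_not (Nat.find_min hex' hj), hmin j (by omega)]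
    · have h1 : u (Nat.find hex') ≠ 0 := Nat.find_spec hex'
      have h2 : α (Nat.find hex') = 0 := hmin _ hfl
      omega
  -- B ⊆ W
  have hBW : B ⊆ W := by
    intro u hu
    rw [hB, mem_filter] at hu
    rw [hW, mem_filter]
    refine ⟨hZT hu.1, Or.inr ⟨l, fun j hj => ?_, by omega⟩⟩
    rw [hZzero u hu.1 j hj, hmin j hj]
  -- α ∈ W
  have hαW : α ∈ W := by rw [hW, mem_filter]; exact ⟨hαT, Or.inl rfl⟩
  -- W ⊆ (T \ Z) ∪ C
  have hWAC : W ⊆ (T \ Z) ∪ C := by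
    intro u hu
    rw [hW, mem_filter] at hu
    obtain ⟨huT, huge⟩ := hu
    by_cases huZ : u ∈ Z
    · refine mem_union_right _ ?_
      rw [hC, mem_filter]
      refine ⟨huZ, ?_⟩
      rcases huge with heqα | ⟨i, heq, hlt⟩
      · rw [heqα]
      · rcases lt_trichotomy i l with h | rfl | h
        · have := hZzero u huZ i h
          have := hmin i h
          omega
        · omega
        · have := heq l h
          omega
    · exact mem_union_left _ (mem_sdiff.2 ⟨huT, huZ⟩)
  -- disjointness
  have hdisjAB : Disjoint (T \ Z) B := by
    rw [disjoint_left]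
    intro u hu hub
    rw [hB, mem_filter] at hub
    exact (mem_sdiff.1 hu).2 hub.1
  have hdisjAC : Disjoint (T \ Z) C := by
    rw [disjoint_left]
    intro u hu hub
    rw [hC, mem_filter] at hub
    exact (mem_sdiff.1 hu).2 hub.1
  have hαnotAB : α ∉ (T \ Z) ∪ B := by
    rw [mem_union]
    rintro (h | h)
    · exact (mem_sdiff.1 h).2 hαZ
    · rw [hB, mem_filter] at h; omega
  -- lower bound on card W
  have hlow : (T \ Z).card + B.card + 1 ≤ W.card := by
    have hsub : ((T \ Z) ∪ B) ∪ {α} ⊆ W := by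
      intro u hu
      rcases mem_union.1 hu with hu | hu
      · rcases mem_union.1 hu with hu | hu
        · exact hAW hu
        · exact hBW hu
      · rw [mem_singleton.1 hu]; exact hαW
    calc (T \ Z).card + B.card + 1
        = ((T \ Z) ∪ B).card + ({α} : Finset (ℕ → ℕ)).card := by
          rw [card_union_of_disjoint hdisjAB, card_singleton]
      _ = (((T \ Z) ∪ B) ∪ {α}).card := by
          rw [card_union_of_disjoint (disjoint_singleton_right.mpr hαnotAB)]
      _ ≤ W.card := card_le_card hsub
  -- upper bound
  have hup : W.card ≤ (T \ Z).card + C.card := le_trans (card_le_card hWAC) (card_union_le _ _)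
  -- cardinalities
  have ht1card : t1.card = m + 1 := by rw [ht1, Nat.card_Icc]; omega
  have ht2card : t2.card = m + 2 - l := by rw [ht2, Nat.card_Icc]
  have hTcard : T.card = (m + d).choose d := by
    rw [hT, card_piAntidiag, ht1card]
    congr 1
    omega
  have hZcard : Z.card = (m + d + 1 - l).choose d := by
    rw [hZ, card_piAntidiag, ht2card]
    congr 1
    omega
  have hCcard : C.card = (m + d + 1 - l - c).choose (d - c) := by
    rw [hC, card_filter_ge t2 hlt2 hcd, card_piAntidiag, ht2card]
    congr 1
    omega
  have hAcard : (T \ Z).card = T.card - Z.card := card_sdiff_of_subset hZT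
  have hZleT : Z.card ≤ T.card := card_le_card hZT
  -- chooseZ evaluations
  have e1 : chooseZ ((m : ℤ) + d + 1 - l) d = ((m + d + 1 - l).choose d : ℤ) := by
    have h1 : ((m : ℤ) + d + 1 - l) = ((m + d + 1 - l : ℕ) : ℤ) := by omega
    rw [h1]
    exact_mod_cast chooseZ_natCast (m + d + 1 - l) d
  have e3 : chooseZ ((m : ℤ) + d - l - c + 1) ((d : ℤ) - c) =
      ((m + d + 1 - l - c).choose (d - c) : ℤ) := by
    have h1 : ((m : ℤ) + d - l - c + 1) = ((m + d + 1 - l - c : ℕ) : ℤ) := by omega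
    have h2 : ((d : ℤ) - c) = ((d - c : ℕ) : ℤ) := by omega
    rw [h1, h2]
    exact_mod_cast chooseZ_natCast (m + d + 1 - l - c) (d - c)
  have e2 : chooseZ ((m : ℤ) + d - l - c) ((d : ℤ) - c - 1) = (B.card : ℤ) := by
    rcases eq_or_lt_of_le hcd with heqcd | hclt
    · have hBempty : B = ∅ := by
        rw [hB, filter_eq_empty_iff]
        intro u hu
        rw [hZ, mem_piAntidiag] at hu
        have h1 : u l ≤ ∑ i ∈ t2, u i := Finset.single_le_sum (fun i _ => Nat.zero_le _) hlt2
        have h2 : ∑ i ∈ t2, u i = d := hu.1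
        omega
      rw [hBempty]
      simp only [card_empty, Nat.cast_zero, chooseZ]
      rw [if_neg (by omega)]
    · have hBcard : B.card = (m + d - l - c).choose (d - c - 1) := by
        rw [hB, card_filter_ge t2 hlt2 (by omega : c + 1 ≤ d), card_piAntidiag, ht2card]
        congr 1
        omega
      have h1 : ((m : ℤ) + d - l - c) = ((m + d - l - c : ℕ) : ℤ) := by omega
      have h2 : ((d : ℤ) - c - 1) = ((d - c - 1 : ℕ) : ℤ) := by omega
      rw [h1, h2, hBcard]
      exact_mod_cast chooseZ_natCast (m + d - l - c) (d - c - 1)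
  rw [e1, e2, e3, hsW]
  constructor
  · omega
  · omega
end

section
/- Define Ω'(d,m) as Ω(d,m) with the m−1 tuples (0,...,0,d,0,...,0) (d in position j for 2 ≤ j ≤ m) removed. Let w'_{r−(m−1)}(d,m) = (α_1,...,α_{m+1}), let l be the smallest index with α_l ≠ 0, and let s be such that (α_1,...,α_{m+1}) = w_s(d,m). If m ≤ r < binom(m+d,d), then s = r − (m − l); if r = binom(m+d,d), then s = r. -/
open Finset

lemma lexGT_irrefl (u : ℕ → ℕ) : ¬ lexGT u u := by
  rintro ⟨i, -, h⟩; exact lt_irrefl _ h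

lemma lexGT_asymm {u w : ℕ → ℕ} (h1 : lexGT u w) (h2 : lexGT w u) : False := by
  obtain ⟨i, hi, hi'⟩ := h1
  obtain ⟨j, hj, hj'⟩ := h2
  rcases lt_trichotomy i j with h | h | h
  · rw [hj i h] at hi'; omega
  · subst h; omega
  · rw [hi j h] at hj'; omega

lemma lexGE_antisymm {u w : ℕ → ℕ} (h1 : lexGE u w) (h2 : lexGE w u) : u = w := by
  rcases h1 with h1 | h1
  · exact h1
  rcases h2 with h2 | h2
  · exact h2.symm
  · exact absurd h2 (fun h => lexGT_asymm h1 h)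

lemma sum_fin_eq (m : ℕ) (γ : ℕ → ℕ) :
    ∑ i : Fin (m+1), γ (i + 1) = ∑ i ∈ Finset.Icc 1 (m+1), γ i := by
  rw [Fin.sum_univ_eq_sum_range (fun i => γ (i+1)) (m+1)]
  refine Finset.sum_nbij' (fun i => i + 1) (fun j => j - 1) ?_ ?_ ?_ ?_ ?_ <;>
      simp only [Finset.mem_range, Finset.mem_Icc]
  · intros; omega
  · intros; omega
  · intros; omega
  · intros; omega
  · intro a _; trivial

noncomputable def omegaEquiv (d m : ℕ) :
    (Omega d m : Set (ℕ → ℕ)) ≃ {P : Fin (m+1) → ℕ // ∑ i, P i = d} where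
  toFun γ := ⟨fun i => γ.1 (i + 1), by rw [sum_fin_eq]; exact γ.2.2⟩
  invFun f := ⟨fun i => if h : 1 ≤ i ∧ i ≤ m + 1 then f.1 ⟨i - 1, by omega⟩ else 0, by
    constructor
    · intro i hi; simp only [dif_neg (show ¬(1 ≤ i ∧ i ≤ m + 1) by omega)]
    · rw [← sum_fin_eq m]
      refine Eq.trans ?_ f.2
      apply Finset.sum_congr rfl
      intro i _
      rw [dif_pos (show 1 ≤ (i:ℕ) + 1 ∧ (i:ℕ) + 1 ≤ m + 1 by omega)]
      congr 1⟩
  left_inv := by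
    rintro ⟨γ, hγ⟩
    ext i
    by_cases h : 1 ≤ i ∧ i ≤ m + 1
    · simp only [dif_pos h]
      congr 1
      omega
    · simp only [dif_neg h]
      exact (hγ.1 i (by omega)).symm
  right_inv := by
    rintro ⟨f, hf⟩
    ext i
    simp only [dif_pos (show 1 ≤ (i : ℕ) + 1 ∧ (i : ℕ) + 1 ≤ m + 1 by omega)]
    congr 1

lemma ncard_Omega (d m : ℕ) : (Omega d m).ncard = (m + d).choose d := by
  have h := Nat.card_congr ((omegaEquiv d m).trans (Sym.equivNatSumOfFintype (Fin (m+1)) d).symm)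
  rw [Nat.card_coe_set_eq] at h
  rw [h, Nat.card_eq_fintype_card, Sym.card_sym_eq_choose, Fintype.card_fin]
  congr 1
  omega

lemma finite_Omega (d m : ℕ) : (Omega d m).Finite := by
  have : Finite (Omega d m) :=
    Finite.of_equiv _ ((omegaEquiv d m).trans (Sym.equivNatSumOfFintype (Fin (m+1)) d).symm).symm
  exact Set.finite_coe_iff.mp this

lemma ej_mem (d m j : ℕ) (h1 : 1 ≤ j) (h2 : j ≤ m + 1) :
    (fun i => if i = j then d else 0) ∈ Omega d m := by
  constructor
  · intro i hi
    simp only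
    rw [if_neg (by omega)]
  · rw [Finset.sum_ite_eq' (Finset.Icc 1 (m+1)) j (fun _ => d)]
    rw [if_pos (by simp [Finset.mem_Icc]; omega)]

lemma eq_ej_of_eq_d {d m : ℕ} {γ : ℕ → ℕ} (hγ : γ ∈ Omega d m) {j : ℕ}
    (hj1 : 1 ≤ j) (hj2 : j ≤ m + 1) (hjd : γ j = d) :
    γ = fun i => if i = j then d else 0 := by
  have hsum := hγ.2
  have hj : j ∈ Finset.Icc 1 (m+1) := by simp [Finset.mem_Icc]; omega
  rw [← Finset.add_sum_erase _ _ hj, hjd] at hsum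
  have h0 : ∀ i ∈ (Finset.Icc 1 (m+1)).erase j, γ i = 0 :=
    Finset.sum_eq_zero_iff.mp (by omega)
  funext i
  by_cases hi : i = j
  · simp [hi, hjd]
  · simp only [if_neg hi]
    by_cases hmem : i ∈ Finset.Icc 1 (m+1)
    · exact h0 i (Finset.mem_erase.mpr ⟨hi, hmem⟩)
    · exact hγ.1 i (by simp [Finset.mem_Icc] at hmem; omega)

lemma lexGE_bot {d m : ℕ} {u : ℕ → ℕ} (hu : u ∈ Omega d m) :
    lexGE u (fun i => if i = m + 1 then d else 0) := by
  classical
  set β : ℕ → ℕ := fun i => if i = m + 1 then d else 0 with hβ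
  by_cases h : u = β
  · exact Or.inl h
  have hex : ∃ i, u i ≠ β i := by
    by_contra hc; push_neg at hc; exact h (funext hc)
  right
  have hne : u (Nat.find hex) ≠ β (Nat.find hex) := Nat.find_spec hex
  have hagree : ∀ j, j < Nat.find hex → u j = β j := fun j hj => by
    have := Nat.find_min hex hj; simpa using this
  refine ⟨Nat.find hex, hagree, ?_⟩
  set i := Nat.find hex with hi
  have hβ0 : ∀ k, k ≠ m + 1 → β k = 0 := fun k hk => if_neg hk
  have hi0 : i ≠ 0 := by
    intro h0
    exact hne (by rw [h0, hu.1 0 (Or.inl rfl), hβ0 0 (by omega)])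
  have him : i ≤ m := by
    by_contra hgt
    push_neg at hgt
    rcases Nat.lt_or_ge (m+1) i with hgt' | hle
    · exact hne (by rw [hu.1 i (Or.inr hgt'), hβ0 i (by omega)])
    · have hieq : i = m + 1 := by omega
      apply hne
      have hsum : ∑ j ∈ Finset.Icc 1 (m+1), u j = u (m+1) := by
        apply Finset.sum_eq_single (m+1)
        · intro b hb hbne
          simp only [Finset.mem_Icc] at hb
          rw [hagree b (by omega), hβ0 b hbne]
        · intro hmem; simp [Finset.mem_Icc] at hmem
      have hd2 : u (m+1) = d := by rw [← hsum]; exact hu.2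
      rw [hieq, hd2, hβ]
      simp
  rw [hβ0 i (by omega)]
  exact Nat.pos_of_ne_zero (fun h0 => hne (by rw [h0, hβ0 i (by omega)]))

lemma ejIcc_eq (d k : ℕ) :
    ({γ | ∃ j, 2 ≤ j ∧ j ≤ k ∧ γ = fun i => if i = j then d else 0} : Set (ℕ → ℕ)) =
      (fun j => fun i => if i = j then d else 0) '' Set.Icc 2 k := by
  ext γ
  simp only [Set.mem_setOf_eq, Set.mem_image, Set.mem_Icc]
  constructor
  · rintro ⟨j, h1, h2, rfl⟩; exact ⟨j, ⟨h1, h2⟩, rfl⟩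
  · rintro ⟨j, ⟨h1, h2⟩, rfl⟩; exact ⟨j, h1, h2, rfl⟩

lemma ej_injOn (d k : ℕ) (hd : 1 ≤ d) :
    Set.InjOn (fun j => fun i => if i = j then d else 0) (Set.Icc 2 k : Set ℕ) := by
  intro a _ b _ hab
  by_contra hne
  have h1 : (if a = a then d else 0) = (if a = b then d else 0) := congrFun hab a
  rw [if_pos rfl, if_neg hne] at h1
  omega

lemma ncard_ejIcc (d k : ℕ) (hd : 1 ≤ d) :
    ({γ | ∃ j, 2 ≤ j ∧ j ≤ k ∧ γ = fun i => if i = j then d else 0} : Set (ℕ → ℕ)).ncard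
      = k - 1 := by
  rw [ejIcc_eq, Set.ncard_image_of_injOn (ej_injOn d k hd), ← Finset.coe_Icc,
    Set.ncard_coe_finset, Nat.card_Icc]
  omega

lemma finite_ejIcc (d k : ℕ) :
    ({γ | ∃ j, 2 ≤ j ∧ j ≤ k ∧ γ = fun i => if i = j then d else 0} : Set (ℕ → ℕ)).Finite := by
  rw [ejIcc_eq]
  exact (Set.finite_Icc 2 k).image _

/-- Let `w'_{r−(m−1)}(d,m) = (α_1,…,α_{m+1})` (the `(r−(m−1))`-th largest element of
`Ω'(d,m)`), let `l` be the smallest index with `α_l ≠ 0`, and let `s` be such that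
`(α_1,…,α_{m+1}) = w_s(d,m)`. If `m ≤ r < C(m+d,d)` then `s = r − (m−l)`;
if `r = C(m+d,d)` then `s = r`. -/
theorem rank_in_Omega_of_rank_in_OmegaP (m d r s : ℕ) (hm : 1 ≤ m) (hd : 1 ≤ d)
    (hr : m ≤ r) (hr' : r ≤ Nat.choose (m + d) d)
    (α : ℕ → ℕ) (hα : α ∈ OmegaP d m)
    (hαr : {u ∈ OmegaP d m | lexGE u α}.ncard = r - (m - 1))
    (l : ℕ) (hl : α l ≠ 0) (hmin : ∀ j, j < l → α j = 0)
    (hs : {u ∈ Omega d m | lexGE u α}.ncard = s) :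
    (r < Nat.choose (m + d) d → s = r - (m - l)) ∧
      (r = Nat.choose (m + d) d → s = r) := by
  classical
  obtain ⟨hαΩ, hαR⟩ := hα
  have hsupp := hαΩ.1
  have hl1 : 1 ≤ l := by
    rcases Nat.eq_zero_or_pos l with h0 | h
    · exact absurd (hsupp 0 (Or.inl rfl)) (h0 ▸ hl)
    · exact h
  have hlm1 : l ≤ m + 1 := by
    by_contra hgt; push_neg at hgt; exact hl (hsupp l (Or.inr hgt))
  -- strict comparisons with the removed tuples
  have hejGT_lt : ∀ j, 1 ≤ j → j < l → lexGT (fun i => if i = j then d else 0) α := by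
    intro j hj1 hjl
    refine ⟨j, fun i hi => ?_, ?_⟩
    · show (if i = j then d else 0) = α i
      rw [if_neg (by omega), hmin i (by omega)]
    · show α j < (if j = j then d else 0)
      rw [if_pos rfl, hmin j hjl]; omega
  have hejGT_gt : ∀ j, l < j → lexGT α (fun i => if i = j then d else 0) := by
    intro j hjl
    refine ⟨l, fun i hi => ?_, ?_⟩
    · show α i = (if i = j then d else 0)
      rw [hmin i hi, if_neg (by omega)]
    · show (if l = j then d else 0) < α l
      rw [if_neg (by omega)]; omega
  have hαld : 2 ≤ l → l ≤ m → α l < d := by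
    intro h2 hm'
    by_contra hge; push_neg at hge
    have hle : α l ≤ d := by
      calc α l ≤ ∑ i ∈ Finset.Icc 1 (m+1), α i :=
            Finset.single_le_sum (fun i _ => Nat.zero_le _)
              (by simp only [Finset.mem_Icc]; omega)
        _ = d := hαΩ.2
    exact hαR ⟨l, h2, hm', eq_ej_of_eq_d hαΩ (by omega) (by omega) (le_antisymm hle hge)⟩
  have hkey : ∀ j, 2 ≤ j → j ≤ m → (lexGE (fun i => if i = j then d else 0) α ↔ j ≤ l) := by
    intro j h2 hjm
    constructor
    · intro hge
      by_contra hgt; push_neg at hgt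
      have h1 := hejGT_gt j hgt
      rcases hge with heq | hgt'
      · rw [heq] at h1; exact absurd h1 (lexGT_irrefl α)
      · exact absurd hgt' (fun hh => lexGT_asymm h1 hh)
    · intro hjl
      rcases Nat.lt_or_ge j l with h | h
      · exact Or.inr (hejGT_lt j (by omega) h)
      · have hjleq : j = l := by omega
        subst hjleq
        refine Or.inr ⟨j, fun i hi => ?_, ?_⟩
        · show (if i = j then d else 0) = α i
          rw [if_neg (by omega), hmin i hi]
        · show α j < (if j = j then d else 0)
          rw [if_pos rfl]
          exact hαld h2 hjm
  set Rm : Set (ℕ → ℕ) :=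
    {γ | ∃ j, 2 ≤ j ∧ j ≤ m ∧ γ = fun i => if i = j then d else 0} with hRm
  have hOP : OmegaP d m = Omega d m \ Rm := rfl
  have hfinΩ : (Omega d m).Finite := finite_Omega d m
  have hfinΩ' : (OmegaP d m).Finite := hfinΩ.subset (fun u hu => hu.1)
  have hRsub : Rm ⊆ Omega d m := by
    rintro γ ⟨j, h2, hjm, rfl⟩; exact ej_mem d m j (by omega) (by omega)
  have hdecomp : {u ∈ Omega d m | lexGE u α} =
      {u ∈ OmegaP d m | lexGE u α} ∪ {u ∈ Rm | lexGE u α} := by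
    ext u
    simp only [Set.mem_setOf_eq, Set.mem_union, hOP, Set.mem_diff]
    constructor
    · rintro ⟨hu, hge⟩
      by_cases hR : u ∈ Rm
      · exact Or.inr ⟨hR, hge⟩
      · exact Or.inl ⟨⟨hu, hR⟩, hge⟩
    · rintro (⟨⟨hu, -⟩, hge⟩ | ⟨hR, hge⟩)
      · exact ⟨hu, hge⟩
      · exact ⟨hRsub hR, hge⟩
  have hdisj : Disjoint {u ∈ OmegaP d m | lexGE u α} {u ∈ Rm | lexGE u α} := by
    rw [Set.disjoint_left]
    rintro u ⟨hu, -⟩ ⟨hR, -⟩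
    exact hu.2 hR
  have hB : {u ∈ Rm | lexGE u α} =
      {γ | ∃ j, 2 ≤ j ∧ j ≤ min l m ∧ γ = fun i => if i = j then d else 0} := by
    ext u
    simp only [Set.mem_setOf_eq, hRm]
    constructor
    · rintro ⟨⟨j, h2, hjm, rfl⟩, hge⟩
      exact ⟨j, h2, le_min ((hkey j h2 hjm).1 hge) hjm, rfl⟩
    · rintro ⟨j, h2, hjm, rfl⟩
      rw [le_min_iff] at hjm
      exact ⟨⟨j, h2, hjm.2, rfl⟩, (hkey j h2 hjm.2).2 hjm.1⟩
  have hcardB : {u ∈ Rm | lexGE u α}.ncard = min l m - 1 := by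
    rw [hB]; exact ncard_ejIcc d (min l m) hd
  have hkeyeq : s = (r - (m - 1)) + (min l m - 1) := by
    rw [← hs, hdecomp,
      Set.ncard_union_eq hdisj (hfinΩ'.subset (Set.sep_subset _ _))
        (by rw [hB]; exact finite_ejIcc d (min l m)),
      hαr, hcardB]
  have hcardΩ' : (OmegaP d m).ncard = (m + d).choose d - (m - 1) := by
    rw [hOP, Set.ncard_diff hRsub (finite_ejIcc d m), ncard_Omega, ncard_ejIcc d m hd]
  have hstepB : l = m + 1 → r = (m + d).choose d := by
    intro hlm
    have hαd : α (m + 1) = d := by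
      have hsum : ∑ j ∈ Finset.Icc 1 (m+1), α j = α (m+1) := by
        apply Finset.sum_eq_single (m+1)
        · intro b hb hbne
          simp only [Finset.mem_Icc] at hb
          exact hmin b (by omega)
        · intro hmem; simp [Finset.mem_Icc] at hmem
      rw [← hsum]; exact hαΩ.2
    have hαeq : α = fun i => if i = m + 1 then d else 0 :=
      eq_ej_of_eq_d hαΩ (by omega) le_rfl hαd
    have hfull : {u ∈ OmegaP d m | lexGE u α} = OmegaP d m := by
      ext u
      simp only [Set.mem_setOf_eq]
      exact ⟨fun h => h.1, fun h => ⟨h, hαeq ▸ lexGE_bot h.1⟩⟩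
    rw [hfull, hcardΩ'] at hαr
    omega
  have hstepC : r = (m + d).choose d → l = m + 1 := by
    intro hrc
    have heq : {u ∈ OmegaP d m | lexGE u α} = OmegaP d m := by
      apply Set.eq_of_subset_of_ncard_le (Set.sep_subset _ _) _ hfinΩ'
      rw [hαr, hcardΩ']
      omega
    have hbotP : (fun i => if i = m + 1 then d else 0) ∈ OmegaP d m := by
      refine ⟨ej_mem d m (m+1) (by omega) le_rfl, ?_⟩
      rintro ⟨j, h2, hjm, hej⟩
      have h1 : (if m + 1 = m + 1 then d else 0) = (if m + 1 = j then d else 0) :=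
        congrFun hej (m+1)
      rw [if_pos rfl, if_neg (by omega)] at h1
      omega
    rw [← heq] at hbotP
    have hαeq : α = fun i => if i = m + 1 then d else 0 :=
      lexGE_antisymm (lexGE_bot hαΩ) hbotP.2
    rw [hαeq] at hl
    by_contra hne
    simp only [if_neg hne] at hl
    exact hl rfl
  refine ⟨?_, ?_⟩
  · intro hrC
    have hlm : l ≤ m := by
      by_contra hgt
      have hBB := hstepB (by omega)
      omega
    rw [min_eq_left hlm] at hkeyeq
    omega
  · intro hrc
    have hlm := hstepC hrc
    rw [min_eq_right (by omega : m ≤ l)] at hkeyeq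
    omega
end

section
/- For m = 2: if 1 ≤ t ≤ d and binom(d−t+1,2) < r−1 ≤ binom(d−t+2,2), then H'_{r−1}(d,2) = t·d + binom(d−t+2,2) − r + 1; and if binom(d−1,2) < r−1 ≤ binom(d+2,2) − 1, then H'_{r−1}(d,2) = binom(d+2,2) − r. -/
open Finset

/-- Encoding of a triple summing to `d` by its first two entries. -/
def eFun (d : ℕ) (p : ℕ × ℕ) : ℕ → ℕ :=
  fun i => if i = 1 then p.1 else if i = 2 then p.2 else if i = 3 then d - p.1 - p.2 else 0

lemma eFun_one (d : ℕ) (p : ℕ × ℕ) : eFun d p 1 = p.1 := rfl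
lemma eFun_two (d : ℕ) (p : ℕ × ℕ) : eFun d p 2 = p.2 := rfl
lemma eFun_three (d : ℕ) (p : ℕ × ℕ) : eFun d p 3 = d - p.1 - p.2 := rfl
lemma eFun_other (d : ℕ) (p : ℕ × ℕ) (i : ℕ) (h : i = 0 ∨ 3 < i) : eFun d p i = 0 := by
  unfold eFun
  rw [if_neg (by omega), if_neg (by omega), if_neg (by omega)]

lemma eFun_inj (d : ℕ) : Function.Injective (eFun d) := by
  intro p q h
  have h1 := congrFun h 1
  have h2 := congrFun h 2
  rw [eFun_one, eFun_one] at h1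
  rw [eFun_two, eFun_two] at h2
  exact Prod.ext h1 h2

lemma funext_nat4 (f g : ℕ → ℕ) (h0 : f 0 = g 0) (h1 : f 1 = g 1) (h2 : f 2 = g 2)
    (h3 : f 3 = g 3) (hh : ∀ i, 3 < i → f i = g i) : f = g := by
  funext i
  have hcase : i = 0 ∨ i = 1 ∨ i = 2 ∨ i = 3 ∨ 3 < i := by omega
  rcases hcase with h | h | h | h | h
  · rw [h]; exact h0
  · rw [h]; exact h1
  · rw [h]; exact h2
  · rw [h]; exact h3
  · exact hh i h

lemma choose_succ_two (n : ℕ) : Nat.choose (n + 1) 2 = Nat.choose n 2 + n := by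
  have h : Nat.choose (n + 1) 2 = Nat.choose n 1 + Nat.choose n 2 := Nat.choose_succ_succ n 1
  rw [Nat.choose_one_right] at h
  omega

lemma sum_id_choose (n : ℕ) : ∑ k ∈ Finset.range n, (k + 1) = Nat.choose (n + 1) 2 := by
  induction n with
  | zero => simp
  | succ n ih =>
    rw [Finset.sum_range_succ, ih, choose_succ_two (n + 1)]

lemma sum_rev_choose (n : ℕ) : ∑ k ∈ Finset.range n, (n - k) = Nat.choose (n + 1) 2 := by
  rw [← sum_id_choose n, ← Finset.sum_range_reflect (fun k => k + 1) n]
  exact Finset.sum_congr rfl fun j hj => by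
    rw [Finset.mem_range] at hj; omega

/-- For `m = 2`, with `w'_{r−1}(d,2) = (α_1,α_2,α_3)` and `H'_{r−1}(d,2) = α_1·d + α_2`:
if `1 ≤ t ≤ d` and `C(d−t+1,2) < r−1 ≤ C(d−t+2,2)` then
`H'_{r−1}(d,2) = t·d + C(d−t+2,2) + 1 − r`; and if
`C(d−1,2) < r−1 ≤ C(d+2,2) − 1` then `H'_{r−1}(d,2) = C(d+2,2) − r`. -/
theorem Hprime_formula_m_two (d r : ℕ) (hd : 1 ≤ d)
    (hr : 2 ≤ r) (hr' : r ≤ Nat.choose (d + 2) 2)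
    (α : ℕ → ℕ) (hα : α ∈ OmegaP d 2)
    (hαr : {u ∈ OmegaP d 2 | lexGE u α}.ncard = r - 1) :
    (∀ t : ℕ, 1 ≤ t → t ≤ d →
        Nat.choose (d - t + 1) 2 < r - 1 → r - 1 ≤ Nat.choose (d - t + 2) 2 →
        α 1 * d + α 2 = t * d + (Nat.choose (d - t + 2) 2 + 1 - r)) ∧
      (Nat.choose (d - 1) 2 < r - 1 → r - 1 ≤ Nat.choose (d + 2) 2 - 1 →
        α 1 * d + α 2 = Nat.choose (d + 2) 2 - r) := by
  classical
  obtain ⟨⟨hsupp, hsum⟩, hex⟩ := hα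
  have hIcc : (Finset.Icc 1 3 : Finset ℕ) = {1, 2, 3} := by decide
  have hsum3 : α 1 + α 2 + α 3 = d := by
    rw [hIcc, Finset.sum_insert (by decide), Finset.sum_insert (by decide),
      Finset.sum_singleton] at hsum
    omega
  have hα0 : α 0 = 0 := hsupp 0 (Or.inl rfl)
  have hαhi : ∀ i, 3 < i → α i = 0 := fun i hi => hsupp i (Or.inr hi)
  have hne : ¬(α 1 = 0 ∧ α 2 = d) := by
    rintro ⟨h1, h2⟩
    refine hex ⟨2, le_refl 2, le_refl 2, funext_nat4 _ _ ?_ ?_ ?_ ?_ ?_⟩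
    · rw [if_neg (by omega)]; exact hα0
    · rw [if_neg (by omega)]; exact h1
    · rw [if_pos rfl]; exact h2
    · rw [if_neg (by omega)]; omega
    · intro i hi; rw [if_neg (by omega)]; exact hαhi i hi
  set T : Finset (ℕ × ℕ) := (Finset.range (d + 1) ×ˢ Finset.range (d + 1)).filter
      (fun p => p.1 + p.2 ≤ d ∧ ¬(p.1 = 0 ∧ p.2 = d) ∧
        (α 1 < p.1 ∨ (p.1 = α 1 ∧ α 2 ≤ p.2))) with hT
  have hS : {u ∈ OmegaP d 2 | lexGE u α} = ↑(T.image (eFun d)) := by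
    ext u
    simp only [Set.mem_setOf_eq, Finset.coe_image, Set.mem_image, Finset.mem_coe, hT,
      Finset.mem_filter, Finset.mem_product, Finset.mem_range]
    constructor
    · rintro ⟨⟨⟨husupp, husum⟩, huex⟩, hlex⟩
      have hu0 : u 0 = 0 := husupp 0 (Or.inl rfl)
      have huhi : ∀ i, 3 < i → u i = 0 := fun i hi => husupp i (Or.inr hi)
      have husum3 : u 1 + u 2 + u 3 = d := by
        rw [hIcc, Finset.sum_insert (by decide), Finset.sum_insert (by decide),
          Finset.sum_singleton] at husum
        omega
      have hune : ¬(u 1 = 0 ∧ u 2 = d) := by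
        rintro ⟨h1, h2⟩
        refine huex ⟨2, le_refl 2, le_refl 2, funext_nat4 _ _ ?_ ?_ ?_ ?_ ?_⟩
        · rw [if_neg (by omega)]; exact hu0
        · rw [if_neg (by omega)]; exact h1
        · rw [if_pos rfl]; exact h2
        · rw [if_neg (by omega)]; omega
        · intro i hi; rw [if_neg (by omega)]; exact huhi i hi
      have hlex' : α 1 < u 1 ∨ (u 1 = α 1 ∧ α 2 ≤ u 2) := by
        rcases hlex with heq | ⟨i, hj, hi⟩
        · rw [heq]; exact Or.inr ⟨rfl, le_refl _⟩
        · have hcase : i = 0 ∨ i = 1 ∨ i = 2 ∨ i = 3 ∨ 3 < i := by omega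
          rcases hcase with h | h | h | h | h
          · subst h; exact absurd hi (by omega)
          · subst h; exact Or.inl hi
          · subst h; exact Or.inr ⟨hj 1 (by omega), le_of_lt hi⟩
          · subst h
            exfalso
            have e1 : u 1 = α 1 := hj 1 (by omega)
            have e2 : u 2 = α 2 := hj 2 (by omega)
            omega
          · have h4 : u i = 0 := huhi i h
            rw [h4] at hi
            exact absurd hi (by omega)
      refine ⟨(u 1, u 2), ⟨⟨by omega, by omega⟩, by omega, hune, hlex'⟩, ?_⟩
      refine funext_nat4 _ _ ?_ ?_ ?_ ?_ ?_
      · rw [eFun_other _ _ _ (Or.inl rfl)]; exact hu0.symm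
      · rfl
      · rfl
      · show d - u 1 - u 2 = u 3
        omega
      · intro i hi
        rw [eFun_other _ _ _ (Or.inr hi)]
        exact (huhi i hi).symm
    · rintro ⟨p, ⟨⟨hp1, hp2⟩, hple, hpne, hplex⟩, hpe⟩
      subst hpe
      have hOm : eFun d p ∈ Omega d 2 := by
        constructor
        · intro i hi
          exact eFun_other d p i (by omega)
        · rw [hIcc, Finset.sum_insert (by decide), Finset.sum_insert (by decide),
            Finset.sum_singleton, eFun_one, eFun_two, eFun_three]
          omega
      refine ⟨⟨hOm, ?_⟩, ?_⟩
      · rintro ⟨j, hj2, hj2', hfe⟩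
        have hj : j = 2 := le_antisymm hj2' hj2
        subst hj
        have e1 := congrFun hfe 1
        have e2 := congrFun hfe 2
        rw [eFun_one, if_neg (by omega)] at e1
        rw [eFun_two, if_pos rfl] at e2
        exact hpne ⟨e1, e2⟩
      · rcases hplex with h | ⟨h1, h2⟩
        · refine Or.inr ⟨1, ?_, ?_⟩
          · intro j hj
            have hj0 : j = 0 := by omega
            subst hj0
            rw [eFun_other _ _ _ (Or.inl rfl), hα0]
          · rwa [eFun_one]
        · rcases lt_or_eq_of_le h2 with h2' | h2'
          · refine Or.inr ⟨2, ?_, ?_⟩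
            · intro j hj
              have hj01 : j = 0 ∨ j = 1 := by omega
              rcases hj01 with hj0 | hj0 <;> subst hj0
              · rw [eFun_other _ _ _ (Or.inl rfl), hα0]
              · rw [eFun_one, h1]
            · rwa [eFun_two]
          · refine Or.inl (funext_nat4 _ _ ?_ ?_ ?_ ?_ ?_)
            · rw [eFun_other _ _ _ (Or.inl rfl), hα0]
            · rw [eFun_one, h1]
            · rw [eFun_two, ← h2']
            · show d - p.1 - p.2 = α 3
              omega
            · intro i hi
              rw [eFun_other _ _ _ (Or.inr hi)]
              exact (hαhi i hi).symm
  have hcard : T.card = r - 1 := by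
    rw [hS, Set.ncard_coe_finset, Finset.card_image_of_injective _ (eFun_inj d)] at hαr
    exact hαr
  -- evaluate T.card
  have hkey : (d - α 1 - α 2) + (if α 1 = 0 then 0 else 1) + Nat.choose (d - α 1 + 1) 2
      = r - 1 := by
    rw [← hcard, hT, Finset.card_filter, Finset.sum_product]
    have hstep : ∑ a ∈ Finset.range (d + 1), ∑ b ∈ Finset.range (d + 1),
        (if (a + b ≤ d ∧ ¬(a = 0 ∧ b = d) ∧ (α 1 < a ∨ (a = α 1 ∧ α 2 ≤ b))) then 1 else 0)
        = (d - α 1 - α 2) + (if α 1 = 0 then 0 else 1) + Nat.choose (d - α 1 + 1) 2 := by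
      rw [Finset.range_eq_Ico,
        ← Finset.sum_Ico_consecutive _ (Nat.zero_le (α 1 + 1)) (show α 1 + 1 ≤ d + 1 by omega),
        ← Finset.sum_Ico_consecutive _ (Nat.zero_le (α 1)) (Nat.le_succ (α 1))]
      have e1 : ∑ a ∈ Finset.Ico 0 (α 1), ∑ b ∈ Finset.Ico 0 (d + 1),
          (if (a + b ≤ d ∧ ¬(a = 0 ∧ b = d) ∧ (α 1 < a ∨ (a = α 1 ∧ α 2 ≤ b))) then 1 else 0)
          = 0 := by
        refine Finset.sum_eq_zero fun a ha => Finset.sum_eq_zero fun b hb => ?_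
        rw [Finset.mem_Ico] at ha
        rw [if_neg (by omega)]
      have e2 : ∑ a ∈ Finset.Ico (α 1) (α 1 + 1), ∑ b ∈ Finset.Ico 0 (d + 1),
          (if (a + b ≤ d ∧ ¬(a = 0 ∧ b = d) ∧ (α 1 < a ∨ (a = α 1 ∧ α 2 ≤ b))) then 1 else 0)
          = (d - α 1 - α 2) + (if α 1 = 0 then 0 else 1) := by
        rw [Nat.Ico_succ_singleton, Finset.sum_singleton, ← Finset.range_eq_Ico,
          ← Finset.card_filter]
        by_cases h0 : α 1 = 0
        · have hane : α 2 ≠ d := fun h => hne ⟨h0, h⟩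
          have hfe : Finset.filter
              (fun b => α 1 + b ≤ d ∧ ¬(α 1 = 0 ∧ b = d) ∧ (α 1 < α 1 ∨ (α 1 = α 1 ∧ α 2 ≤ b)))
              (Finset.range (d + 1)) = Finset.Icc (α 2) (d - 1) := by
            ext b
            simp only [Finset.mem_filter, Finset.mem_range, Finset.mem_Icc,
              lt_self_iff_false, false_or, eq_self_iff_true, true_and]
            omega
          rw [hfe, Nat.card_Icc, if_pos h0]
          omega
        · have hfe : Finset.filter
              (fun b => α 1 + b ≤ d ∧ ¬(α 1 = 0 ∧ b = d) ∧ (α 1 < α 1 ∨ (α 1 = α 1 ∧ α 2 ≤ b)))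
              (Finset.range (d + 1)) = Finset.Icc (α 2) (d - α 1) := by
            ext b
            simp only [Finset.mem_filter, Finset.mem_range, Finset.mem_Icc,
              lt_self_iff_false, false_or, eq_self_iff_true, true_and]
            omega
          rw [hfe, Nat.card_Icc, if_neg h0]
          omega
      have e3 : ∑ a ∈ Finset.Ico (α 1 + 1) (d + 1), ∑ b ∈ Finset.Ico 0 (d + 1),
          (if (a + b ≤ d ∧ ¬(a = 0 ∧ b = d) ∧ (α 1 < a ∨ (a = α 1 ∧ α 2 ≤ b))) then 1 else 0)
          = Nat.choose (d - α 1 + 1) 2 := by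
        rw [Finset.sum_Ico_eq_sum_range, show d + 1 - (α 1 + 1) = d - α 1 by omega]
        rw [show Nat.choose (d - α 1 + 1) 2 = ∑ k ∈ Finset.range (d - α 1), (d - α 1 - k) from
          (sum_rev_choose (d - α 1)).symm]
        refine Finset.sum_congr rfl fun k hk => ?_
        rw [Finset.mem_range] at hk
        rw [← Finset.range_eq_Ico, ← Finset.card_filter]
        have hfe : Finset.filter
            (fun b => α 1 + 1 + k + b ≤ d ∧ ¬(α 1 + 1 + k = 0 ∧ b = d) ∧
              (α 1 < α 1 + 1 + k ∨ (α 1 + 1 + k = α 1 ∧ α 2 ≤ b)))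
            (Finset.range (d + 1)) = Finset.range (d - α 1 - k) := by
          ext b
          simp only [Finset.mem_filter, Finset.mem_range]
          omega
        rw [hfe, Finset.card_range]
      rw [e1, e2, e3]
      omega
    exact hstep.symm
  constructor
  · intro t ht1 htd hlo hhi
    by_cases h0 : α 1 = 0
    · exfalso
      have hane : α 2 ≠ d := fun h => hne ⟨h0, h⟩
      have hmono : Nat.choose (d - t + 2) 2 ≤ Nat.choose (d - α 1 + 1) 2 :=
        Nat.choose_le_choose 2 (by omega)
      rw [if_pos h0] at hkey
      omega
    · rw [if_neg h0] at hkey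
      have hsucc : Nat.choose (d - α 1 + 2) 2 = Nat.choose (d - α 1 + 1) 2 + (d - α 1 + 1) := by
        rw [show d - α 1 + 2 = (d - α 1 + 1) + 1 by omega, choose_succ_two]
      have ha1d : α 1 ≤ d := by omega
      have hteq : t = α 1 := by
        rcases lt_trichotomy t (α 1) with h | h | h
        · exfalso
          have hm : Nat.choose (d - α 1 + 2) 2 ≤ Nat.choose (d - t + 1) 2 :=
            Nat.choose_le_choose 2 (by omega)
          omega
        · exact h
        · exfalso
          have hm : Nat.choose (d - t + 2) 2 ≤ Nat.choose (d - α 1 + 1) 2 :=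
            Nat.choose_le_choose 2 (by omega)
          omega
      subst hteq
      have h2 : α 2 = Nat.choose (d - α 1 + 2) 2 + 1 - r := by omega
      rw [h2]
  · intro hlo hhi
    have hsucc1 : Nat.choose (d + 2) 2 = Nat.choose (d + 1) 2 + (d + 1) := choose_succ_two (d + 1)
    have hsucc2 : Nat.choose (d + 1) 2 = Nat.choose d 2 + d := choose_succ_two d
    have hsucc3 : Nat.choose d 2 = Nat.choose (d - 1) 2 + (d - 1) := by
      have h := choose_succ_two (d - 1)
      rw [show d - 1 + 1 = d by omega] at h
      exact h
    by_cases h0 : α 1 = 0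
    · have hane : α 2 ≠ d := fun h => hne ⟨h0, h⟩
      rw [if_pos h0] at hkey
      rw [h0]
      have hch : Nat.choose (d - α 1 + 1) 2 = Nat.choose (d + 1) 2 := by rw [h0, Nat.sub_zero]
      omega
    · rw [if_neg h0] at hkey
      have ha1d : α 1 ≤ d := by omega
      have hsucc : Nat.choose (d - α 1 + 2) 2 = Nat.choose (d - α 1 + 1) 2 + (d - α 1 + 1) := by
        rw [show d - α 1 + 2 = (d - α 1 + 1) + 1 by omega, choose_succ_two]
      have hle2 : α 1 = 1 ∨ α 1 = 2 := by
        by_contra hc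
        push_neg at hc
        have h3 : 3 ≤ α 1 := by omega
        have hm : Nat.choose (d - α 1 + 2) 2 ≤ Nat.choose (d - 1) 2 :=
          Nat.choose_le_choose 2 (by omega)
        omega
      rcases hle2 with h1 | h1
      · rw [h1] at hkey ⊢
        rw [show d - 1 + 1 = d by omega] at hkey
        omega
      · rw [h1] at hkey ⊢
        have hd2 : 2 ≤ d := by omega
        rw [show d - 2 + 1 = d - 1 by omega] at hkey
        omega
end
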